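/- arXiv:2605.13447 — 4 statements merged into one kernel-verified Lean document; each statement's English description precedes it below -/
import Mathlib

section
/- Let N ≥ 2 and λ > 0. Define for t > 0 the function w(t) = log( ((N/(N−1))^{N−1} · N^N · λ^N) / (1 + λ^{N/(N−1)} t^{N/(N−1)})^N ). Then w is smooth on (0,∞), strictly decreasing, and satisfies the radial N-Laplacian ODE: (t^{N−1} (−w'(t))^{N−1})' = t^{N−1} e^{w(t)} for all t > 0. -/
open Real Set Filter

theorem stmt9 (N : ℕ) (hN : 2 ≤ N) (lam : ℝ) (hlam : 0 < lam) (w : ℝ → ℝ)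
    (hw : ∀ t : ℝ, 0 < t →
      w t = Real.log ((((N : ℝ) / (N - 1)) ^ (N - 1) * (N : ℝ) ^ N * lam ^ N) /
        (1 + lam ^ ((N : ℝ) / (N - 1)) * t ^ ((N : ℝ) / (N - 1))) ^ N)) :
    ContDiffOn ℝ (⊤ : ℕ∞) w (Set.Ioi 0) ∧ StrictAntiOn w (Set.Ioi 0) ∧
      ∀ t : ℝ, 0 < t →
        deriv (fun s => s ^ (N - 1) * (-(deriv w s)) ^ (N - 1)) t =
          t ^ (N - 1) * Real.exp (w t) := by
  have hN2R : (2:ℝ) ≤ (N:ℝ) := by exact_mod_cast hN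
  have hN1R : (0:ℝ) < (N:ℝ) - 1 := by linarith
  have hcast : ((N - 1 : ℕ) : ℝ) = (N:ℝ) - 1 := by
    rw [Nat.cast_sub (by omega)]; norm_num
  set α : ℝ := (N : ℝ) / ((N:ℝ) - 1) with hαdef
  have hαpos : 0 < α := div_pos (by linarith) hN1R
  have hα1 : α * ((N:ℝ) - 1) = (N:ℝ) := div_mul_cancel₀ _ hN1R.ne'
  set A : ℝ := lam ^ α with hAdef
  have hApos : 0 < A := Real.rpow_pos_of_pos hlam α
  set c : ℝ := α ^ (N-1) * (N:ℝ)^N * lam^N with hcdef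
  have hcpos : 0 < c := by
    rw [hcdef]
    have hN0 : (0:ℝ) < (N:ℝ) := by linarith
    positivity
  have hdpos : ∀ s : ℝ, 0 < s → 0 < 1 + A * s ^ α := by
    intro s hs
    have := Real.rpow_pos_of_pos hs α
    nlinarith
  have hw' : ∀ s : ℝ, 0 < s → w s = Real.log c - (N:ℝ) * Real.log (1 + A * s ^ α) := by
    intro s hs
    rw [hw s hs, Real.log_div hcpos.ne' (pow_ne_zero _ (hdpos s hs).ne'), Real.log_pow]
  have hwderiv : ∀ s : ℝ, 0 < s →
      HasDerivAt w (-((N:ℝ) * (A * (α * s ^ (α-1)) / (1 + A * s ^ α)))) s := by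
    intro s hs
    have h1 : HasDerivAt (fun x : ℝ => x ^ α) (α * s ^ (α - 1)) s :=
      Real.hasDerivAt_rpow_const (Or.inl hs.ne')
    have h2 : HasDerivAt (fun x : ℝ => 1 + A * x ^ α) (A * (α * s ^ (α - 1))) s :=
      (h1.const_mul A).const_add 1
    have h3 := ((h2.log (hdpos s hs).ne').const_mul (N:ℝ)).const_sub (Real.log c)
    refine h3.congr_of_eventuallyEq ?_
    filter_upwards [Ioi_mem_nhds hs] with x hx
    exact hw' x hx
  have hwderiv' : ∀ s : ℝ, 0 < s →
      deriv w s = -((N:ℝ) * (A * (α * s ^ (α-1)) / (1 + A * s ^ α))) :=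
    fun s hs => (hwderiv s hs).deriv
  have hsmooth : ContDiffOn ℝ (⊤ : ℕ∞) w (Ioi 0) := by
    have hv : ContDiffOn ℝ (⊤ : ℕ∞)
        (fun s : ℝ => Real.log c - (N:ℝ) * Real.log (1 + A * s ^ α)) (Ioi 0) := by
      intro x hx
      have hx0 : (0:ℝ) < x := hx
      have h1 : ContDiffAt ℝ (⊤ : ℕ∞) (fun s : ℝ => 1 + A * s ^ α) x :=
        contDiffAt_const.add (contDiffAt_const.mul
          (Real.contDiffAt_rpow_const_of_ne hx0.ne'))
      have h2 : ContDiffAt ℝ (⊤ : ℕ∞) (fun s : ℝ => Real.log (1 + A * s ^ α)) x :=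
        by have hl := (Real.contDiffAt_log (n := (⊤ : ℕ∞))).mpr (hdpos x hx0).ne'; exact hl.comp x h1
      exact (contDiffAt_const.sub (contDiffAt_const.mul h2)).contDiffWithinAt
    exact hv.congr fun x hx => hw' x hx
  have hanti : StrictAntiOn w (Ioi 0) := by
    intro s hs t ht hst
    have hs0 : (0:ℝ) < s := hs
    have ht0 : (0:ℝ) < t := ht
    rw [hw' s hs0, hw' t ht0]
    have h1 : s ^ α < t ^ α := Real.rpow_lt_rpow hs0.le hst hαpos
    have h2 : Real.log (1 + A * s ^ α) < Real.log (1 + A * t ^ α) :=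
      Real.log_lt_log (hdpos s hs0) (by nlinarith)
    have hN0 : (0:ℝ) < (N:ℝ) := by linarith
    nlinarith
  refine ⟨hsmooth, hanti, ?_⟩
  intro t ht
  have hDt := hdpos t ht
  set K : ℝ := ((N:ℝ) * (A * α)) ^ (N - 1) with hKdef
  have hpow1 : ∀ x : ℝ, x ^ (N-1) * x = x ^ N := by
    intro x; rw [← pow_succ]; congr 1; omega
  have hA' : A ^ (N-1) = lam ^ N := by
    rw [hAdef, ← Real.rpow_natCast (lam ^ α) (N-1), ← Real.rpow_mul hlam.le, hcast, hα1,
      Real.rpow_natCast]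
  have hKN : K * (N:ℝ) = c := by
    have h : K * (N:ℝ) = ((N:ℝ)^(N-1) * (N:ℝ)) * (A^(N-1) * α^(N-1)) := by
      rw [hKdef, mul_pow, mul_pow]; ring
    rw [h, hpow1, hA', hcdef]; ring
  have h1 : HasDerivAt (fun s : ℝ => K * s ^ N) (K * ((N:ℝ) * t ^ (N-1))) t :=
    (hasDerivAt_pow N t).const_mul K
  have h2 : HasDerivAt (fun x : ℝ => 1 + A * x ^ α) (A * (α * t ^ (α - 1))) t :=
    ((Real.hasDerivAt_rpow_const (Or.inl ht.ne')).const_mul A).const_add 1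
  have hg := h1.div (h2.pow (N-1)) (pow_ne_zero _ hDt.ne')
  have hFg : (fun s => s ^ (N-1) * (-(deriv w s)) ^ (N-1)) =ᶠ[nhds t]
      (fun s : ℝ => K * s ^ N / (1 + A * s ^ α) ^ (N-1)) := by
    filter_upwards [Ioi_mem_nhds ht] with s hs
    have hs0 : (0:ℝ) < s := hs
    rw [hwderiv' s hs0, neg_neg]
    have e1 : (s ^ (α-1)) ^ (N-1) = s := by
      rw [← Real.rpow_natCast (s ^ (α-1)) (N-1), ← Real.rpow_mul hs0.le, hcast]
      have h3 : (α - 1) * ((N:ℝ) - 1) = 1 := by rw [sub_mul, hα1]; ring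
      rw [h3, Real.rpow_one]
    have h4 : (N:ℝ) * (A * (α * s ^ (α-1)) / (1 + A * s ^ α)) =
        ((N:ℝ) * (A * α)) * s ^ (α-1) / (1 + A * s ^ α) := by ring
    rw [h4, div_pow, mul_pow, e1, ← hKdef, ← hpow1 s]
    ring
  rw [hFg.deriv_eq, show (fun s : ℝ => K * s ^ N / (1 + A * s ^ α) ^ (N-1)) =
    ((fun s : ℝ => K * s ^ N) / (fun x : ℝ => 1 + A * x ^ α) ^ (N - 1)) from rfl, hg.deriv]
  simp only [Pi.pow_apply]
  have hexp : Real.exp (w t) = c / (1 + A * t ^ α) ^ N := by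
    rw [hw t ht]
    exact Real.exp_log (div_pos hcpos (pow_pos hDt N))
  rw [hexp]
  have hta : t ^ (α - 1) = t ^ α / t := by
    rw [Real.rpow_sub ht, Real.rpow_one]
  rw [hta, ← hKN]
  obtain ⟨e, he⟩ : ∃ e, N = e + 2 := ⟨N - 2, by omega⟩
  subst he
  have E1 : e + 2 - 1 = e + 1 := by omega
  have E2 : e + 2 - 1 - 1 = e := by omega
  rw [E1, E2] at *
  rw [hαdef]
  have ht0 : t ≠ 0 := ht.ne'
  have hD0 : (1 : ℝ) + A * t ^ α ≠ 0 := hDt.ne'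
  push_cast
  have hden : ((e:ℝ) + 2) - 1 = (e:ℝ) + 1 := by ring
  rw [hden]
  have he1 : (e:ℝ) + 1 ≠ 0 := by positivity
  field_simp
  ring
end

section
/- Let N ≥ 2, β ∈ (0,N), and λ > 0. Define for t > 0 the function u(t) = log( ((N/(N−1))^{N−1} (N−β)^N λ^N) / (1 + λ^{N/(N−1)} t^{(N−β)/(N−1)})^N ). Then u satisfies the weighted radial N-Laplacian ODE: (t^{N−1} (−u'(t))^{N−1})' = t^{N−1−β} e^{u(t)} for all t > 0. -/
/-!
Write `n = N - 1`, `a = λ^{N/n}`, `p = (N - β)/n` and `C` for the numerator, so that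
`u = log C - N log (1 + a t^p)` and `-u' = N a p t^{p-1} / (1 + a t^p)`. The flux
`t^n (-u')^n = (N a p)^n t^{np} / (1 + a t^p)^n` has derivative
`(N a p)^n · np · t^{np-1} / (1 + a t^p)^N`, because the quotient rule leaves the factor
`(1 + a t^p) - a t^p = 1`. Finally `np - 1 = N - 1 - β` and `(N a p)^n · np = C`.
-/

open Real Filter Topology

section Bubble

variable {a p s : ℝ}

lemma hasDerivAt_log_div_one_add_mul_rpow_pow {C : ℝ} (hC : 0 < C) (ha : 0 ≤ a) (hs : 0 < s)
    (m : ℕ) :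
    HasDerivAt (fun x => log (C / (1 + a * x ^ p) ^ m))
      (-(m * a * p * s ^ (p - 1) / (1 + a * s ^ p))) s := by
  have hden := ((hasDerivAt_rpow_const (p := p) (Or.inl hs.ne')).const_mul a).const_add 1
  have hlog := (hasDerivAt_const s (log C)).sub
    ((hden.log (by positivity)).const_mul (m : ℝ))
  refine (hlog.congr_deriv (by ring)).congr_of_eventuallyEq ?_
  filter_upwards [Ioi_mem_nhds hs] with x hx
  have hx_den : 0 < 1 + a * x ^ p := by have := rpow_pos_of_pos hx p; positivity
  rw [log_div hC.ne' (by positivity), log_pow]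
  rfl

lemma pow_mul_mul_rpow_sub_one_div_pow (hs : 0 < s) (b h : ℝ) (n : ℕ) :
    s ^ n * (b * s ^ (p - 1) / h) ^ n = b ^ n * (s ^ (n * p) / h ^ n) := by
  have hs₀ := hs.ne'
  rw [rpow_sub_one hs₀, mul_comm (n : ℝ), rpow_mul_natCast hs.le, div_pow, mul_pow, div_pow]
  field_simp

lemma hasDerivAt_rpow_mul_div_one_add_mul_rpow_pow (ha : 0 ≤ a) (hs : 0 < s) (n : ℕ) :
    HasDerivAt (fun x => x ^ (n * p) / (1 + a * x ^ p) ^ n)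
      (n * p * s ^ (n * p - 1) / (1 + a * s ^ p) ^ (n + 1)) s := by
  have hden := ((hasDerivAt_rpow_const (p := p) (Or.inl hs.ne')).const_mul a).const_add 1
  have hpos : 0 < 1 + a * s ^ p := by positivity
  refine ((hasDerivAt_rpow_const (p := n * p) (Or.inl hs.ne')).div (hden.pow n)
    (pow_ne_zero n hpos.ne')).congr_deriv ?_
  have hs₀ := hs.ne'
  simp only [Pi.pow_apply]
  rcases n with _ | n
  · simp
  · rw [rpow_sub_one hs₀, rpow_sub_one hs₀]
    push_cast
    field_simp
    ring

end Bubble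

lemma bubble_flux_constant {lam : ℝ} (hlam : 0 ≤ lam) {n : ℕ} (hn : n ≠ 0) (q : ℝ) :
    ((n + 1) * lam ^ ((n + 1) / n : ℝ) * (q / n)) ^ n * (n * (q / n)) =
      ((n + 1) / n) ^ n * q ^ (n + 1) * lam ^ (n + 1) := by
  have hlam_pow : (lam ^ ((n + 1) / n : ℝ)) ^ n = lam ^ (n + 1) := by
    rw [← rpow_mul_natCast hlam, div_mul_cancel₀ _ (by exact_mod_cast hn)]
    exact_mod_cast rpow_natCast lam (n + 1)
  have hn₀ : (n : ℝ) ≠ 0 := by exact_mod_cast hn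
  rw [mul_pow, mul_pow, hlam_pow, div_pow, div_pow]
  field_simp
  ring

theorem stmt10_general (N : ℕ) (hN : 2 ≤ N) (β lam : ℝ) (hβN : β < N)
    (hlam : 0 < lam) (u : ℝ → ℝ)
    (hu : ∀ t : ℝ, 0 < t →
      u t = Real.log ((((N : ℝ) / (N - 1)) ^ (N - 1) * ((N : ℝ) - β) ^ N * lam ^ N) /
        (1 + lam ^ ((N : ℝ) / (N - 1)) * t ^ (((N : ℝ) - β) / (N - 1))) ^ N)) :
    ∀ t : ℝ, 0 < t →
      deriv (fun s => s ^ (N - 1) * (-(deriv u s)) ^ (N - 1)) t =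
        t ^ ((N : ℝ) - 1 - β) * Real.exp (u t) := by
  obtain ⟨n, rfl⟩ : ∃ n, N = n + 1 := ⟨N - 1, by omega⟩
  have hn : n ≠ 0 := by omega
  push_cast at hu hβN ⊢
  simp only [add_sub_cancel_right] at hu ⊢
  set a := lam ^ (((n : ℝ) + 1) / n)
  set p := ((n : ℝ) + 1 - β) / n
  set C := (((n : ℝ) + 1) / n) ^ n * ((n : ℝ) + 1 - β) ^ (n + 1) * lam ^ (n + 1)
  have ha : 0 ≤ a := by positivity
  have hC : 0 < C := by
    have : 0 < (n : ℝ) + 1 - β := by linarith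
    positivity
  have hderiv (s : ℝ) (hs : 0 < s) :
      deriv u s = -(((n + 1 : ℕ) : ℝ) * a * p * s ^ (p - 1) / (1 + a * s ^ p)) := by
    refine ((hasDerivAt_log_div_one_add_mul_rpow_pow hC ha hs (n + 1)).congr_of_eventuallyEq
      ?_).deriv
    filter_upwards [Ioi_mem_nhds hs] with x hx using hu x hx
  intro t ht
  have hflux : (fun s => s ^ n * (-deriv u s) ^ n) =ᶠ[𝓝 t]
      fun s => (((n + 1 : ℕ) : ℝ) * a * p) ^ n * (s ^ (n * p) / (1 + a * s ^ p) ^ n) := by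
    filter_upwards [Ioi_mem_nhds ht] with s hs
    rw [hderiv s hs, neg_neg, ← mul_div_assoc, pow_mul_mul_rpow_sub_one_div_pow hs]
  rw [hflux.deriv_eq, ((hasDerivAt_rpow_mul_div_one_add_mul_rpow_pow ha ht n).const_mul _).deriv,
    hu t ht, exp_log (by positivity)]
  have hexp : (n : ℝ) * p - 1 = n - β := by
    simp only [p]
    field_simp
    ring
  have hconst : (((n + 1 : ℕ) : ℝ) * a * p) ^ n * (n * p) = C := by
    push_cast
    exact bubble_flux_constant hlam.le hn _
  rw [hexp, ← hconst]
  ring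

theorem stmt10 (N : ℕ) (hN : 2 ≤ N) (β lam : ℝ) (hβ : 0 < β) (hβN : β < N)
    (hlam : 0 < lam) (u : ℝ → ℝ)
    (hu : ∀ t : ℝ, 0 < t →
      u t = Real.log ((((N : ℝ) / (N - 1)) ^ (N - 1) * ((N : ℝ) - β) ^ N * lam ^ N) /
        (1 + lam ^ ((N : ℝ) / (N - 1)) * t ^ (((N : ℝ) - β) / (N - 1))) ^ N)) :
    ∀ t : ℝ, 0 < t →
      deriv (fun s => s ^ (N - 1) * (-(deriv u s)) ^ (N - 1)) t =
        t ^ ((N : ℝ) - 1 - β) * Real.exp (u t) :=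
  stmt10_general N hN β lam hβN hlam u hu
end

section
/- Let N ≥ 2, β ∈ (0,N), λ > 0, and let u(x) = log( ((N/(N−1))^{N−1} (N−β)^N λ^N) / (1 + λ^{N/(N−1)} |x|^{(N−β)/(N−1)})^N ) for x ∈ ℝ^N \ {0}. Then ∫_{ℝ^N} |x|^{−β} e^{u(x)} dx = N · (N(N−β)/(N−1))^{N−1} · ω_N, where ω_N is the Lebesgue measure of the Euclidean unit ball in ℝ^N. -/
/-!
The integrand is radial, so polar coordinates turn the integral into
`N ω_N ∫₀^∞ r^(N-1) f(r) dr`. With `k = N - 1`, `b = (N - β) / k` and `m = λ^(N/k)`, the radial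
integrand is a constant multiple of `r^(b k - 1) / (1 + m r^b)^(k + 1)`, which is the derivative of
`(m r^b / (1 + m r^b))^k / (k b m^k)`; this antiderivative increases from `0` to `1 / (k b m^k)`.
-/

open MeasureTheory Real Set Filter Topology

section RationalProfile

variable {b m : ℝ}

lemma hasDerivAt_mul_rpow_div_one_add_pow (k : ℕ) (hm : 0 ≤ m) {r : ℝ} (hr : 0 < r) :
    HasDerivAt (fun s ↦ (m * s ^ b / (1 + m * s ^ b)) ^ k)
      (k * b * m ^ k * (r ^ (b * k - 1) / (1 + m * r ^ b) ^ (k + 1))) r := by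
  have hq : 0 < 1 + m * r ^ b := by positivity
  have hrb : HasDerivAt (fun s ↦ m * s ^ b) (m * (b * r ^ (b - 1))) r :=
    (hasDerivAt_rpow_const (Or.inl hr.ne')).const_mul m
  refine ((hrb.div (hrb.const_add 1) hq.ne').pow k).congr_deriv ?_
  rcases k with _ | j
  · simp
  have hrpow : r ^ (b * ↑(j + 1) - 1) = (r ^ b) ^ j * r ^ (b - 1) := by
    rw [← rpow_natCast, ← rpow_mul hr.le, ← rpow_add hr]
    congr 1
    push_cast
    ring
  rw [hrpow, Nat.add_sub_cancel]
  simp only [Pi.div_apply, div_pow]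
  field_simp
  ring

lemma tendsto_mul_rpow_div_one_add_mul_rpow (hb : 0 < b) (hm : 0 < m) :
    Tendsto (fun r ↦ m * r ^ b / (1 + m * r ^ b)) atTop (𝓝 1) := by
  have hden : Tendsto (fun r : ℝ ↦ 1 + m * r ^ b) atTop atTop :=
    tendsto_atTop_add_const_left _ 1 ((tendsto_rpow_atTop hb).const_mul_atTop hm)
  have h : Tendsto (fun r ↦ 1 - (1 + m * r ^ b)⁻¹) atTop (𝓝 (1 - 0)) :=
    tendsto_const_nhds.sub hden.inv_tendsto_atTop
  rw [sub_zero] at h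
  refine h.congr' ?_
  filter_upwards [eventually_ge_atTop 0] with r hr
  have : 0 < 1 + m * r ^ b := by positivity
  field_simp
  ring

lemma integral_Ioi_rpow_div_one_add_mul_rpow_pow {k : ℕ} (hk : k ≠ 0) (hb : 0 < b)
    (hm : 0 < m) :
    ∫ r in Ioi (0 : ℝ), r ^ (b * k - 1) / (1 + m * r ^ b) ^ (k + 1) = (k * b * m ^ k)⁻¹ := by
  have hcont : ContinuousWithinAt (fun s : ℝ ↦ (m * s ^ b / (1 + m * s ^ b)) ^ k) (Ici 0) 0 := by
    have h0 : ContinuousAt (fun s : ℝ ↦ m * s ^ b) 0 :=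
      (continuousAt_rpow_const 0 b (Or.inr hb.le)).const_mul m
    exact ((h0.div (h0.const_add 1) (by simp [zero_rpow hb.ne'])).pow k).continuousWithinAt
  have hFTC := integral_Ioi_of_hasDerivAt_of_nonneg hcont
    (fun r hr ↦ hasDerivAt_mul_rpow_div_one_add_pow k hm.le hr)
    (fun r (hr : 0 < r) ↦ by positivity) ((tendsto_mul_rpow_div_one_add_mul_rpow hb hm).pow k)
  rw [integral_const_mul] at hFTC
  simp only [zero_rpow hb.ne', mul_zero, zero_div, zero_pow hk, one_pow, sub_zero] at hFTC
  exact eq_inv_of_mul_eq_one_right hFTC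

lemma integral_Ioi_pow_mul_rpow_neg_div_one_add_mul_rpow_pow {k : ℕ} (hk : k ≠ 0) {β : ℝ}
    (hβ : β < k + 1) (hm : 0 < m) :
    ∫ r in Ioi (0 : ℝ), r ^ k * (r ^ (-β) / (1 + m * r ^ ((k + 1 - β) / k)) ^ (k + 1)) =
      ((k + 1 - β) * m ^ k)⁻¹ := by
  have hk' : (0 : ℝ) < k := by positivity
  have hkb : (k : ℝ) * ((k + 1 - β) / k) = k + 1 - β := mul_div_cancel₀ _ hk'.ne'
  have hrpow : ∀ r ∈ Ioi (0 : ℝ), r ^ k * r ^ (-β) = r ^ ((k + 1 - β) / k * k - 1) := by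
    intro r (hr : 0 < r)
    rw [mul_comm _ (k : ℝ), hkb, show (k : ℝ) + 1 - β - 1 = k + -β by ring, rpow_add hr,
      rpow_natCast]
  rw [setIntegral_congr_fun measurableSet_Ioi fun r hr ↦ by rw [← mul_div_assoc, hrpow r hr],
    integral_Ioi_rpow_div_one_add_mul_rpow_pow hk (div_pos (by linarith) hk') hm, hkb]

end RationalProfile

theorem stmt11_general (N : ℕ) (hN : 2 ≤ N) (β lam : ℝ) (hβN : β < N)
    (hlam : 0 < lam) (u : EuclideanSpace ℝ (Fin N) → ℝ)
    (hu : ∀ x : EuclideanSpace ℝ (Fin N),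
      u x = Real.log ((((N : ℝ) / (N - 1)) ^ (N - 1) * ((N : ℝ) - β) ^ N * lam ^ N) /
        (1 + lam ^ ((N : ℝ) / (N - 1)) * ‖x‖ ^ (((N : ℝ) - β) / (N - 1))) ^ N)) :
    ∫ x : EuclideanSpace ℝ (Fin N), ‖x‖ ^ (-β) * Real.exp (u x) =
      N * ((N : ℝ) * ((N : ℝ) - β) / (N - 1)) ^ (N - 1) *
        (volume (Metric.ball (0 : EuclideanSpace ℝ (Fin N)) 1)).toReal := by
  obtain ⟨k, rfl⟩ : ∃ k, N = k + 1 := ⟨N - 1, by omega⟩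
  have hk : k ≠ 0 := by omega
  push_cast at hu hβN ⊢
  simp only [add_sub_cancel_right] at hu ⊢
  set m := lam ^ (((k : ℝ) + 1) / k)
  set C := (((k : ℝ) + 1) / k) ^ k * ((k : ℝ) + 1 - β) ^ (k + 1) * lam ^ (k + 1)
  have hmk : m ^ k = lam ^ (k + 1) := by
    rw [← rpow_natCast, ← rpow_mul hlam.le, div_mul_cancel₀ _ (by positivity), ← Nat.cast_succ,
      rpow_natCast]
  have hprofile : ∀ x : EuclideanSpace ℝ (Fin (k + 1)), ‖x‖ ^ (-β) * exp (u x) =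
      C * (‖x‖ ^ (-β) / (1 + m * ‖x‖ ^ (((k : ℝ) + 1 - β) / k)) ^ (k + 1)) := by
    intro x
    have : 0 < C := by positivity
    rw [hu, exp_log (by positivity)]
    ring
  rw [integral_congr_ae (ae_of_all _ hprofile), integral_fun_norm_addHaar volume
      fun r ↦ C * (r ^ (-β) / (1 + m * r ^ (((k : ℝ) + 1 - β) / k)) ^ (k + 1)),
    finrank_euclideanSpace_fin, Nat.add_sub_cancel]
  simp only [smul_eq_mul, mul_left_comm _ C, integral_const_mul]
  rw [integral_Ioi_pow_mul_rpow_neg_div_one_add_mul_rpow_pow hk hβN (rpow_pos_of_pos hlam _), hmk,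
    measureReal_def]
  have hconst : C * ((k + 1 - β) * lam ^ (k + 1))⁻¹ = ((k + 1) * (k + 1 - β) / k) ^ k := by
    have : 0 < (k : ℝ) + 1 - β := by linarith
    simp only [C, mul_div_right_comm _ (_ - β), mul_pow, pow_succ (_ - β)]
    field_simp
  rw [← hconst, nsmul_eq_mul]
  push_cast
  ring

theorem stmt11 (N : ℕ) (hN : 2 ≤ N) (β lam : ℝ) (hβ : 0 < β) (hβN : β < N)
    (hlam : 0 < lam) (u : EuclideanSpace ℝ (Fin N) → ℝ)
    (hu : ∀ x : EuclideanSpace ℝ (Fin N),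
      u x = Real.log ((((N : ℝ) / (N - 1)) ^ (N - 1) * ((N : ℝ) - β) ^ N * lam ^ N) /
        (1 + lam ^ ((N : ℝ) / (N - 1)) * ‖x‖ ^ (((N : ℝ) - β) / (N - 1))) ^ N)) :
    ∫ x : EuclideanSpace ℝ (Fin N), ‖x‖ ^ (-β) * Real.exp (u x) =
      N * ((N : ℝ) * ((N : ℝ) - β) / (N - 1)) ^ (N - 1) *
        (volume (Metric.ball (0 : EuclideanSpace ℝ (Fin N)) 1)).toReal :=
  stmt11_general N hN β lam hβN hlam u hu
end

section
/- Let N ≥ 2, β ∈ (0, N), and a ≥ 2·t₀^{N−β−γ₁} where γ₁ > N − β and t₀ ≥ 1. Define I(T) = ∫_{t₀}^{T} ( a^{1/(N−1)} − (a − τ^{N−β−γ₁})^{1/(N−1)} ) / τ dτ for T > t₀. Then 0 ≤ I(T) ≤ (1/((N−1)(γ₁ − N + β))) · t₀^{(N−β−γ₁)·(2−N)/(N−1)} · t₀^{N−β−γ₁} / 1, i.e., I(T) is bounded above by a constant independent of T; in particular sup_{T > t₀} I(T) < ∞. -/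
/-!
Concavity of `s ↦ s ^ p` for `p = 1/(N-1) ∈ (0, 1]` gives
`a^p - (a - x)^p ≤ p x (a - x)^(p-1)`, and `a - τ^c ≥ t₀^c` (with `c = N - β - γ₁ < 0`)
bounds `(a - τ^c)^(p-1)` by `t₀^(c(p-1))`. Hence the integrand is at most a constant times
`τ^(c-1)`, whose integral over `[t₀, ∞)` is `t₀^c / (-c)`.
-/

open Real Set intervalIntegral
open scoped Interval

namespace Real

theorem rpow_sub_rpow_le_mul_rpow_sub_one {a b p : ℝ} (hb : 0 < b) (hba : b ≤ a) (hp0 : 0 ≤ p)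
    (hp1 : p ≤ 1) : a ^ p - b ^ p ≤ p * (a - b) * b ^ (p - 1) := by
  have hbern := rpow_one_add_le_one_add_mul_self (s := a / b - 1)
    (by linarith [div_nonneg (hb.le.trans hba) hb.le]) hp0 hp1
  rw [add_sub_cancel, div_rpow (hb.le.trans hba) hb.le,
    div_le_iff₀ (rpow_pos_of_pos hb p)] at hbern
  calc a ^ p - b ^ p ≤ (1 + p * (a / b - 1)) * b ^ p - b ^ p := by linarith
    _ = p * (a - b) * b ^ (p - 1) := by rw [rpow_sub_one hb.ne']; field_simp; ring

theorem integral_rpow_sub_one_le_of_neg {c t₀ T : ℝ} (hc : c < 0) (ht₀ : 0 < t₀)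
    (hT : t₀ ≤ T) :
    ∫ τ in t₀..T, τ ^ (c - 1) ≤ t₀ ^ c / -c := by
  have h0 : (0 : ℝ) ∉ [[t₀, T]] := by
    rw [uIcc_of_le hT]
    exact fun h => ht₀.not_ge h.1
  rw [integral_rpow (Or.inr ⟨by linarith, h0⟩), sub_add_cancel, ← neg_div_neg_eq, neg_sub]
  have hTc : 0 < T ^ c := rpow_pos_of_pos (ht₀.trans_le hT) c
  gcongr
  · linarith
  · linarith

end Real

section RpowDeficit

variable {p c t₀ a τ : ℝ}

theorem rpow_deficit_div_nonneg (hp0 : 0 ≤ p) (hc : c ≤ 0) (ht₀ : 0 < t₀)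
    (hτ : t₀ ≤ τ) (ha : 2 * t₀ ^ c ≤ a) : 0 ≤ (a ^ p - (a - τ ^ c) ^ p) / τ := by
  have hτc : τ ^ c ≤ t₀ ^ c := rpow_le_rpow_of_nonpos ht₀ hτ hc
  have hτc0 : 0 < τ ^ c := rpow_pos_of_pos (ht₀.trans_le hτ) c
  have hmono : (a - τ ^ c) ^ p ≤ a ^ p := rpow_le_rpow (by linarith) (by linarith) hp0
  exact div_nonneg (sub_nonneg.mpr hmono) (ht₀.trans_le hτ).le

theorem rpow_deficit_div_le (hp0 : 0 ≤ p) (hp1 : p ≤ 1) (hc : c ≤ 0) (ht₀ : 0 < t₀)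
    (hτ : t₀ ≤ τ) (ha : 2 * t₀ ^ c ≤ a) :
    (a ^ p - (a - τ ^ c) ^ p) / τ ≤ p * t₀ ^ (c * (p - 1)) * τ ^ (c - 1) := by
  have hτ0 : 0 < τ := ht₀.trans_le hτ
  have hτc : τ ^ c ≤ t₀ ^ c := rpow_le_rpow_of_nonpos ht₀ hτ hc
  have ht₀c : 0 < t₀ ^ c := rpow_pos_of_pos ht₀ c
  have hτc0 : 0 < τ ^ c := rpow_pos_of_pos hτ0 c
  have hgap : t₀ ^ c ≤ a - τ ^ c := by linarith
  have hconc := rpow_sub_rpow_le_mul_rpow_sub_one (a := a) (ht₀c.trans_le hgap) (by linarith)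
    hp0 hp1
  have hpow : (a - τ ^ c) ^ (p - 1) ≤ t₀ ^ (c * (p - 1)) := by
    rw [rpow_mul ht₀.le]
    exact rpow_le_rpow_of_nonpos ht₀c hgap (by linarith)
  rw [sub_sub_cancel] at hconc
  rw [div_le_iff₀ hτ0, mul_assoc, ← rpow_add_one hτ0.ne', sub_add_cancel]
  calc a ^ p - (a - τ ^ c) ^ p ≤ p * τ ^ c * (a - τ ^ c) ^ (p - 1) := hconc
    _ ≤ p * τ ^ c * t₀ ^ (c * (p - 1)) := by gcongr
    _ = p * t₀ ^ (c * (p - 1)) * τ ^ c := by ring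

theorem continuousOn_rpow_deficit_div (hp0 : 0 ≤ p) (ht₀ : 0 < t₀) (T : ℝ) :
    ContinuousOn (fun τ => (a ^ p - (a - τ ^ c) ^ p) / τ) (Icc t₀ T) := by
  have hne : ∀ τ ∈ Icc t₀ T, τ ≠ 0 := fun τ hτ => (ht₀.trans_le hτ.1).ne'
  refine ContinuousOn.div ?_ continuousOn_id hne
  exact continuousOn_const.sub <| (continuousOn_const.sub <|
    continuousOn_id.rpow_const fun τ hτ => .inl (hne τ hτ)).rpow_const fun _ _ => .inr hp0

theorem integral_rpow_deficit_div_le (hp0 : 0 ≤ p) (hp1 : p ≤ 1) (hc : c < 0) (ht₀ : 0 < t₀)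
    {T : ℝ} (hT : t₀ ≤ T) (ha : 2 * t₀ ^ c ≤ a) :
    ∫ τ in t₀..T, (a ^ p - (a - τ ^ c) ^ p) / τ ≤
      p * t₀ ^ (c * (p - 1)) * (t₀ ^ c / -c) := by
  have hbound : ContinuousOn (fun τ => p * t₀ ^ (c * (p - 1)) * τ ^ (c - 1)) (Icc t₀ T) :=
    continuousOn_const.mul <|
      continuousOn_id.rpow_const fun τ hτ => .inl (ht₀.trans_le hτ.1).ne'
  calc ∫ τ in t₀..T, (a ^ p - (a - τ ^ c) ^ p) / τ
      ≤ ∫ τ in t₀..T, p * t₀ ^ (c * (p - 1)) * τ ^ (c - 1) :=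
        integral_mono_on hT
          ((continuousOn_rpow_deficit_div hp0 ht₀ T).intervalIntegrable_of_Icc hT)
          (hbound.intervalIntegrable_of_Icc hT)
          fun τ hτ => rpow_deficit_div_le hp0 hp1 hc.le ht₀ hτ.1 ha
    _ = p * t₀ ^ (c * (p - 1)) * ∫ τ in t₀..T, τ ^ (c - 1) := integral_const_mul _ _
    _ ≤ p * t₀ ^ (c * (p - 1)) * (t₀ ^ c / -c) := by
        gcongr
        exact integral_rpow_sub_one_le_of_neg hc ht₀ hT

end RpowDeficit

theorem stmt16_general (N : ℕ) (hN : 2 ≤ N) (β γ₁ t₀ a : ℝ)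
    (hγ : (N : ℝ) - β < γ₁) (ht₀ : 1 ≤ t₀)
    (ha : 2 * t₀ ^ ((N : ℝ) - β - γ₁) ≤ a) :
    ∀ T : ℝ, t₀ < T →
      0 ≤ (∫ τ in t₀..T,
          (a ^ ((1 : ℝ) / (N - 1)) - (a - τ ^ ((N : ℝ) - β - γ₁)) ^ ((1 : ℝ) / (N - 1))) / τ) ∧
        (∫ τ in t₀..T,
            (a ^ ((1 : ℝ) / (N - 1)) - (a - τ ^ ((N : ℝ) - β - γ₁)) ^ ((1 : ℝ) / (N - 1))) / τ) ≤
          1 / (((N : ℝ) - 1) * (γ₁ - N + β)) *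
            t₀ ^ (((N : ℝ) - β - γ₁) * ((2 : ℝ) - N) / (N - 1)) *
            t₀ ^ ((N : ℝ) - β - γ₁) := by
  intro T hT
  have hN1 : (1 : ℝ) ≤ N - 1 := by
    have : (2 : ℝ) ≤ N := by exact_mod_cast hN
    linarith
  have hp0 : (0 : ℝ) ≤ 1 / (N - 1) := by positivity
  have hp1 : (1 : ℝ) / (N - 1) ≤ 1 := (div_le_one (by linarith)).mpr hN1
  have hc : (N : ℝ) - β - γ₁ < 0 := by linarith
  have ht₀0 : 0 < t₀ := by linarith
  refine ⟨integral_nonneg hT.le fun τ hτ =>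
    rpow_deficit_div_nonneg hp0 hc.le ht₀0 hτ.1 ha, ?_⟩
  have hexp : ((N : ℝ) - β - γ₁) * (1 / (N - 1) - 1) =
      (N - β - γ₁) * (2 - N) / (N - 1) := by
    field_simp
    ring
  refine (integral_rpow_deficit_div_le hp0 hp1 hc ht₀0 hT.le ha).trans_eq ?_
  rw [hexp, show -((N : ℝ) - β - γ₁) = γ₁ - N + β by ring]
  field_simp

theorem stmt16 (N : ℕ) (hN : 2 ≤ N) (β γ₁ t₀ a : ℝ) (hβ : 0 < β) (hβN : β < N)
    (hγ : (N : ℝ) - β < γ₁) (ht₀ : 1 ≤ t₀)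
    (ha : 2 * t₀ ^ ((N : ℝ) - β - γ₁) ≤ a) :
    ∀ T : ℝ, t₀ < T →
      0 ≤ (∫ τ in t₀..T,
          (a ^ ((1 : ℝ) / (N - 1)) - (a - τ ^ ((N : ℝ) - β - γ₁)) ^ ((1 : ℝ) / (N - 1))) / τ) ∧
        (∫ τ in t₀..T,
            (a ^ ((1 : ℝ) / (N - 1)) - (a - τ ^ ((N : ℝ) - β - γ₁)) ^ ((1 : ℝ) / (N - 1))) / τ) ≤
          1 / (((N : ℝ) - 1) * (γ₁ - N + β)) *
            t₀ ^ (((N : ℝ) - β - γ₁) * ((2 : ℝ) - N) / (N - 1)) *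
            t₀ ^ ((N : ℝ) - β - γ₁) :=
  stmt16_general N hN β γ₁ t₀ a hγ ht₀ ha
end
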